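/- arXiv:1511.07847 — 2 statements merged into one kernel-verified Lean document; each statement's English description precedes it below -/
import Mathlib

section
/- Let G be a simple graph. Then the following two conditions are equivalent: (i) any two cycles of G whose edge sets are distinct have disjoint edge sets (equivalently, every edge of G is contained in at most one simple cycle); (ii) any two cycles of G whose edge sets are distinct have at most one vertex in common. -/
/-!
If two cycles share an edge they share its two endpoints. Conversely, suppose two edge-disjoint
cycles `p` and `q` share two vertices `a ≠ b`. Cut `q` at `a` and `b` into two arcs and close one
arc, from its first edge on, with a walk from `b` back to `a` along `p`. Shortening that closed
walk to a cycle through the first edge gives a cycle meeting `q` in an edge but missing the other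
arc of `q`, so it neither equals `q` nor is edge-disjoint from it.
-/

namespace SimpleGraph.Walk

variable {V : Type*} [DecidableEq V] {G : SimpleGraph V}

lemma one_lt_card_support_inter_of_mem_edges {u₁ u₂ v₁ v₂ : V} {p : G.Walk u₁ u₂}
    {q : G.Walk v₁ v₂} {e : Sym2 V} (hp : e ∈ p.edges) (hq : e ∈ q.edges) :
    1 < (p.support.toFinset ∩ q.support.toFinset).card := by
  induction e using Sym2.ind with
  | _ c d =>
    refine Finset.one_lt_card.mpr ⟨c, ?_, d, ?_, (p.adj_of_mem_edges hp).ne⟩ <;>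
      simp [p.fst_mem_support_of_mem_edges hp, p.snd_mem_support_of_mem_edges hp,
        q.fst_mem_support_of_mem_edges hq, q.snd_mem_support_of_mem_edges hq]

lemma isCycle_cons_bypass {u v : V} (h : G.Adj u v) (p : G.Walk v u) (hp : s(u, v) ∉ p.edges) :
    (cons h p.bypass).IsCycle :=
  (cons_isCycle_iff _ h).mpr ⟨p.bypass_isPath, fun he => hp (p.edges_bypass_subset_edges he)⟩

lemma IsTrail.exists_isCycle_of_disjoint_edges_of_start {a b : V} {r : G.Walk a a}
    (hr : r.IsTrail) (hb : b ∈ r.support) (hab : a ≠ b) (P : G.Walk b a)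
    (hP : P.edges.Disjoint r.edges) :
    ∃ C : G.Walk a a, C.IsCycle ∧ (∃ e ∈ C.edges, e ∈ r.edges) ∧
      ∃ f ∈ r.edges, f ∉ C.edges := by
  have hsplit := hr.disjoint_edges_takeUntil_dropUntil hb
  have hQ := (hr.takeUntil hb).edges_nodup
  have hr_edges (e : Sym2 V) :
      e ∈ r.edges ↔ e ∈ (r.takeUntil b hb).edges ∨ e ∈ (r.dropUntil b hb).edges := by
    rw [← List.mem_append, ← edges_append, take_spec]
  obtain ⟨a', hadj, T, hT⟩ := exists_eq_cons_of_ne hab (r.takeUntil b hb)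
  obtain ⟨b', hadj', T', hT'⟩ := exists_eq_cons_of_ne hab.symm (r.dropUntil b hb)
  rw [hT, edges_cons] at hsplit hQ hr_edges
  rw [hT', edges_cons] at hsplit hr_edges
  have he_r : s(a, a') ∈ r.edges := (hr_edges _).mpr (.inl List.mem_cons_self)
  have hf_r : s(b, b') ∈ r.edges := (hr_edges _).mpr (.inr List.mem_cons_self)
  have hC_edges : (cons hadj (T.append P).bypass).edges ⊆ s(a, a') :: (T.edges ++ P.edges) := by
    rw [edges_cons, ← edges_append]
    exact List.cons_subset_cons _ (edges_bypass_subset_edges _)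
  refine ⟨cons hadj (T.append P).bypass, isCycle_cons_bypass hadj _ ?_,
    ⟨s(a, a'), List.mem_cons_self, he_r⟩, s(b, b'), hf_r, fun hf => ?_⟩
  · rw [edges_append, List.mem_append, not_or]
    exact ⟨(List.nodup_cons.mp hQ).1, fun he => hP he he_r⟩
  · rcases List.mem_cons.mp (hC_edges hf) with hf | hf
    · exact hsplit (hf ▸ List.mem_cons_self) List.mem_cons_self
    · rcases List.mem_append.mp hf with hf | hf
      · exact hsplit (List.mem_cons_of_mem _ hf) List.mem_cons_self
      · exact hP hf hf_r

lemma IsTrail.exists_isCycle_of_disjoint_edges {u a b : V} {r : G.Walk u u} (hr : r.IsTrail)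
    (ha : a ∈ r.support) (hb : b ∈ r.support) (hab : a ≠ b) (P : G.Walk b a)
    (hP : P.edges.Disjoint r.edges) :
    ∃ C : G.Walk a a, C.IsCycle ∧ (∃ e ∈ C.edges, e ∈ r.edges) ∧
      ∃ f ∈ r.edges, f ∉ C.edges := by
  have hmem : ∀ e, e ∈ (r.rotate a ha).edges ↔ e ∈ r.edges :=
    fun e => (r.rotate_edges a ha).perm.mem_iff
  obtain ⟨C, hC, ⟨e, heC, her⟩, f, hfr, hfC⟩ :=
    (hr.rotate ha).exists_isCycle_of_disjoint_edges_of_start ((mem_support_rotate_iff ..).mpr hb)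
      hab P fun e heP her => hP heP ((hmem e).mp her)
  exact ⟨C, hC, ⟨e, heC, (hmem e).mp her⟩, f, (hmem f).mp hfr, hfC⟩

end SimpleGraph.Walk

open SimpleGraph Walk

/-- In a simple graph, any two cycles with distinct edge sets are edge-disjoint
(every edge lies on at most one simple cycle) iff any two cycles with distinct
edge sets share at most one vertex. -/
theorem stmt2 {V : Type*} [DecidableEq V] (G : SimpleGraph V) :
    (∀ (u v : V) (p : G.Walk u u) (q : G.Walk v v), p.IsCycle → q.IsCycle →
        p.edges.toFinset ≠ q.edges.toFinset →
        Disjoint p.edges.toFinset q.edges.toFinset) ↔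
    (∀ (u v : V) (p : G.Walk u u) (q : G.Walk v v), p.IsCycle → q.IsCycle →
        p.edges.toFinset ≠ q.edges.toFinset →
        (p.support.toFinset ∩ q.support.toFinset).card ≤ 1) := by
  simp only [List.disjoint_toFinset_iff_disjoint]
  constructor
  · intro h u v p q hp hq hne
    by_contra! hcard
    obtain ⟨a, ha, b, hb, hab⟩ := Finset.one_lt_card.mp hcard
    simp only [Finset.mem_inter, List.mem_toFinset] at ha hb
    let P := (p.dropUntil b hb.1).append (p.takeUntil a ha.1)
    have hP : P.edges.Disjoint q.edges := fun e heP heq => by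
      rw [edges_append, List.mem_append] at heP
      refine h u v p q hp hq hne ?_ heq
      rcases heP with he | he
      exacts [p.edges_dropUntil_subset_edges _ he, p.edges_takeUntil_subset_edges _ he]
    obtain ⟨C, hC, ⟨e, heC, heq⟩, f, hfq, hfC⟩ :=
      hq.isTrail.exists_isCycle_of_disjoint_edges ha.2 hb.2 hab P hP
    have hCq : C.edges.toFinset ≠ q.edges.toFinset := fun hCq =>
      hfC (List.mem_toFinset.mp (hCq ▸ List.mem_toFinset.mpr hfq))
    exact h a v C q hC hq hCq heC heq
  · intro h u v p q hp hq hne e hep heq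
    exact (h u v p q hp hq hne).not_gt (one_lt_card_support_inter_of_mem_edges hep heq)
end

section
/- Let G be a simple graph in which any two cycles with distinct edge sets are edge-disjoint (the cactus condition). Let C be a cycle of G and let u, v be two distinct vertices lying on C. Then there is no path in G from u to v of positive length all of whose edges avoid the edge set of C and all of whose internal vertices avoid the vertices of C. -/
/-!
Suppose `q` were such a path from `u` to `v`. One of the two arcs of `C` between `u` and `v` is a
path `p` from `v` to `u`, and since `q` meets `C` only at its endpoints, `q` followed by `p` is a
cycle `D`. The cycles `D` and `C` share the (nonempty) edge set of `p`, so by the cactus condition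
they have the same edge set; but the edges of `q` lie on `D` and not on `C`.
-/

open SimpleGraph Walk

namespace SimpleGraph.Walk

variable {V : Type*} {G : SimpleGraph V}

lemma IsPath.start_notMem_support_tail {u v : V} {p : G.Walk u v} (hp : p.IsPath) :
    u ∉ p.support.tail :=
  (List.nodup_cons.1 (p.cons_tail_support ▸ hp.support_nodup)).1

lemma exists_mem_edges_of_ne {u v : V} (p : G.Walk u v) (huv : u ≠ v) : ∃ e, e ∈ p.edges :=
  List.exists_mem_of_ne_nil _ (edges_eq_nil.not.2 (not_nil_of_ne huv))

lemma IsCycle.exists_isPath_of_mem_support {x u v : V} {C : G.Walk x x} (hC : C.IsCycle)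
    (hu : u ∈ C.support) (hv : v ∈ C.support) :
    ∃ p : G.Walk u v, p.IsPath ∧ p.edges ⊆ C.edges ∧ p.support ⊆ C.support := by
  classical
  have hv' : v ∈ (C.rotate u hu).support := (mem_support_rotate_iff C u hu).2 hv
  refine ⟨(C.rotate u hu).takeUntil v hv', (hC.rotate hu).isPath_takeUntil hv', ?_, ?_⟩
  · exact List.Subset.trans (edges_takeUntil_subset_edges _ hv') (rotate_edges C u hu).perm.subset
  · exact List.Subset.trans (support_takeUntil_subset_support _ hv')
      fun _ => (mem_support_rotate_iff C u hu).1

lemma IsPath.isCycle_append_of_disjoint {u v : V} {p : G.Walk u v} {q : G.Walk v u}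
    (hp : p.IsPath) (hq : q.IsPath) (hpnil : ¬ p.Nil)
    (hedges : p.edges.Disjoint q.edges) (hsupport : p.support.tail.Disjoint q.support.tail) :
    (p.append q).IsCycle := by
  rw [isCycle_def, isTrail_append, tail_support_append, List.nodup_append']
  exact ⟨⟨hp.isTrail, hq.isTrail, hedges⟩, fun h => hpnil (nil_append_iff.1 (h ▸ Nil.nil)).1,
    hp.support_nodup.tail, hq.support_nodup.tail, hsupport⟩

end SimpleGraph.Walk

/-- In a cactus graph, given a cycle `C` and two distinct vertices `u, v` on `C`,
there is no path of positive length from `u` to `v` whose edges avoid the edges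
of `C` and whose internal vertices avoid the vertices of `C`. -/
theorem stmt4 {V : Type*} [DecidableEq V] (G : SimpleGraph V)
    (hcactus : ∀ (a b : V) (p : G.Walk a a) (q : G.Walk b b),
        p.IsCycle → q.IsCycle → p.edges.toFinset ≠ q.edges.toFinset →
        Disjoint p.edges.toFinset q.edges.toFinset)
    (x : V) (C : G.Walk x x) (hC : C.IsCycle)
    (u v : V) (huv : u ≠ v) (hu : u ∈ C.support) (hv : v ∈ C.support) :
    ¬ ∃ q : G.Walk u v, q.IsPath ∧ 0 < q.length ∧
        (∀ e ∈ q.edges, e ∉ C.edges) ∧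
        (∀ w ∈ q.support, w ≠ u → w ≠ v → w ∉ C.support) := by
  rintro ⟨q, hq, -, hqedges, hqint⟩
  obtain ⟨p, hp, hpedges, hpsupp⟩ := hC.exists_isPath_of_mem_support hv hu
  have hD : (q.append p).IsCycle := by
    refine hq.isCycle_append_of_disjoint hp (not_nil_of_ne huv)
      (fun e heq hep => hqedges e heq (hpedges hep)) fun w hwq hwp => ?_
    refine hqint w (List.mem_of_mem_tail hwq) ?_ ?_ (hpsupp (List.mem_of_mem_tail hwp))
    · rintro rfl; exact hq.start_notMem_support_tail hwq
    · rintro rfl; exact hp.start_notMem_support_tail hwp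
  have hsame : (q.append p).edges.toFinset = C.edges.toFinset := by
    obtain ⟨f, hf⟩ := p.exists_mem_edges_of_ne huv.symm
    by_contra hne
    refine Finset.disjoint_left.1 (hcactus u x _ C hD hC hne) ?_
      (List.mem_toFinset.2 (hpedges hf))
    simp [hf]
  obtain ⟨e, he⟩ := q.exists_mem_edges_of_ne huv
  have heD : e ∈ (q.append p).edges.toFinset := by simp [he]
  exact hqedges e he (List.mem_toFinset.1 (hsame ▸ heD))
end
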